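/- Let G be a connected graph and P = u_1, u_2, ..., u_p, u_1 a cycle. If for every i, at most one of any two consecutive edges incident to a common unoccupied vertex can be a 'tree edge' (where a tree edge into a vertex without a settled robot requires settled robots at both the previous and next vertices, which are then both adjacent to it), then not all edges of the cycle can be tree edges; i.e., any edge set in which every edge's head either is in a set S or has both cycle-neighbors in S with the head adjacent to both cannot contain all edges of a cycle. -/

import Mathlib

open SimpleGraph

/-- `S` is an independent set of `G`. -/
def SimpleGraph.IsIndepSet' {V : Type*} (G : SimpleGraph V) (S : Set V) : Prop :=
  ∀ u ∈ S, ∀ v ∈ S, ¬ G.Adj u v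

/-- If `S` (the settled vertices) is independent and every unsettled vertex is incident
to at most one tree edge (at most one of any two edges incident to a common unoccupied
vertex can be a tree edge), then the tree edges contain no cycle
`u₁ → u₂ → ⋯ → u_p → u₁`. -/
theorem tree_edges_no_cycle {V : Type*} (G : SimpleGraph V) (S : Set V)
    (hS : G.IsIndepSet' S)
    (T : Set (Sym2 V)) (hT : T ⊆ G.edgeSet)
    (hone : ∀ v ∉ S, ∀ u w : V, u ≠ w → s(u, v) ∈ T → s(w, v) ∈ T → False) :
    ¬ ∃ (u : V) (l : List V), 2 ≤ l.length ∧ (u :: l).Nodup ∧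
        List.Chain (fun a b => s(a, b) ∈ T) u (l ++ [u]) := by
  rintro ⟨u, l, hlen, hnd, hch⟩
  match l, hlen, hnd, hch with
  | a :: b :: rest, _, hnd, hch =>
    simp only [List.cons_append, List.Chain, List.isChain_cons_cons] at hch
    obtain ⟨h1, h2, hch⟩ := hch
    simp only [List.nodup_cons, List.mem_cons, not_or] at hnd
    have hab : G.Adj a b := hT h2
    have ha : a ∈ S := by
      by_contra ha
      exact hone a ha u b (by tauto) h1 (by rwa [Sym2.eq_swap])
    have hb : b ∈ S := by
      by_contra hb
      cases rest with
      | nil =>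
        simp only [List.nil_append, List.Chain, List.isChain_cons_cons] at hch
        exact hone b hb a u (by tauto) h2 (by rw [Sym2.eq_swap]; exact hch.1)
      | cons c rest' =>
        simp only [List.cons_append, List.Chain, List.isChain_cons_cons] at hch
        have hac : a ≠ c := fun h => hnd.2.1.2 (h ▸ List.mem_cons_self)
        exact hone b hb a c hac h2 (by rw [Sym2.eq_swap]; exact hch.1)
    exact hS a ha b hb hab
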